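/- Let t, t' ∈ B_n be distinct bracketings of size n, and let G be a digraph whose graph algebra A(G) satisfies the bracketing identity t ≈ t'. Then every strongly connected component of G is either trivial or an m-whirl for some divisor m of M(t,t'). -/

import Mathlib

/-!
Let `K` be a nontrivial strongly connected component, `v ∈ K`, and `m` the gcd of the lengths of
the closed walks at `v`. The lengths of the walks from `v` to a vertex of `K` are well defined
modulo `m`, and their classes cut `K` into blocks such that every edge of `K` goes from one block
to the next.

A tuple of vertices evaluates to something other than `∞` under a bracketing `t` exactly when it
maps `G(t)` homomorphically into `G`. An infinite walk composed with the depth function of `G(t)`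
is such a homomorphism, hence by the identity also one from `G(t')`. Along a walk in `K` from `v`
this shows that the depths in `G(t)` and `G(t')` agree modulo `m`, so `m ∣ M(t,t')`. Where the
depths first differ it produces a shortcut: every infinite walk has an edge from its `a`-th to its
`b`-th vertex, with `b > a + 1` and `b ≡ a + 1 (mod m)`. Iterating the shortcut turns every walk
in `K` of length `k * (b - a - 1) + 1` into an edge, and since all large multiples of `m` are
lengths of closed walks at `v`, such walks join every vertex to every vertex of the next block.
-/

namespace AssocSpec

/-- Bracketings of products `x₁ x₂ ⋯ xₙ` represented as binary trees whose
leaves, read from left to right, are the variables `x₁, …, xₙ`. -/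
inductive BTree : Type
  | leaf : BTree
  | node : BTree → BTree → BTree

namespace BTree

/-- The size of a bracketing: its number of variables (leaves). -/
def size : BTree → ℕ
  | leaf => 1
  | node l r => l.size + r.size

/-- Evaluate a bracketing in a magma `(A, op)`, the leaves taking the values
`f k, f (k+1), …` from left to right. -/
def evalFrom {A : Type*} (op : A → A → A) : BTree → (ℕ → A) → ℕ → A
  | leaf, f, k => f k
  | node l r, f, k => op (evalFrom op l f k) (evalFrom op r f (k + l.size))

/-- The term operation induced by a bracketing `t` on a magma `(A, op)`;
the `i`-th variable (0-indexed) takes the value `f i`. -/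
def termOp {A : Type*} (op : A → A → A) (t : BTree) (f : ℕ → A) : A :=
  evalFrom op t f 0

/-- The depth sequence of the DFS tree `G(t)` of a bracketing `t`: the `i`-th
entry is the depth of the `i`-th variable (0-indexed) in `G(t)`. -/
def depths : BTree → List ℕ
  | leaf => [0]
  | node l r => l.depths ++ r.depths.map (· + 1)

/-- The depth of the `i`-th variable (0-indexed) in the DFS tree `G(t)`. -/
def depth (t : BTree) (i : ℕ) : ℕ := t.depths.getD i 0

/-- The height of the DFS tree `G(t)`: the maximum depth of a variable. -/
def height (t : BTree) : ℕ := t.depths.foldr max 0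

/-- The edges of the DFS tree `G(t)`, the variables being indexed from the
given offset: `(p, c)` is an edge iff `x_p` is the parent of `x_c`. -/
def edgesFrom : BTree → ℕ → List (ℕ × ℕ)
  | leaf, _ => []
  | node l r, k => (k, k + l.size) :: (l.edgesFrom k ++ r.edgesFrom (k + l.size))

/-- The edges of the DFS tree `G(t)` (variables indexed from `0`). -/
def edges (t : BTree) : List (ℕ × ℕ) := t.edgesFrom 0

end BTree

open Classical in
/-- The operation of the graph algebra of the digraph with vertex set `V` and
edge relation `E`; `none` plays the role of `∞`. -/
noncomputable def gaOp {V : Type*} (E : V → V → Prop) :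
    Option V → Option V → Option V
  | some x, some y => if E x y then some x else none
  | _, _ => none

/-- The magma `(A, op)` satisfies the bracketing identity `t ≈ t'`. -/
def Satisfies {A : Type*} (op : A → A → A) (t t' : BTree) : Prop :=
  ∀ f : ℕ → A, BTree.termOp op t f = BTree.termOp op t' f

/-- The `n`-th member `s_n` of the associative spectrum of the magma `(A, op)`:
the number of distinct term operations induced by bracketings of size `n`. -/
noncomputable def spectrum {A : Type*} (op : A → A → A) (n : ℕ) : ℕ :=
  Set.ncard {g : (ℕ → A) → A | ∃ t : BTree, t.size = n ∧ g = BTree.termOp op t}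

/-- Reachability (by a walk) in the digraph with edge relation `E`. -/
def Reach {V : Type*} (E : V → V → Prop) : V → V → Prop :=
  Relation.ReflTransGen E

/-- `u` and `v` lie in the same strongly connected component. -/
def SameSCC {V : Type*} (E : V → V → Prop) (u v : V) : Prop :=
  Reach E u v ∧ Reach E v u

/-- The strongly connected component of `v`, as a set of vertices. -/
def scc {V : Type*} (E : V → V → Prop) (v : V) : Set V :=
  {u | SameSCC E u v}

/-- `v` lies in a nontrivial strongly connected component (one carrying at
least one edge), i.e. `v` lies on a closed walk of positive length. -/
def InNontrivialSCC {V : Type*} (E : V → V → Prop) (v : V) : Prop :=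
  ∃ u, E v u ∧ Reach E u v

/-- The induced subgraph on the set `K` (with the edge relation `E`) is an
`m`-whirl: `K` is partitioned into blocks `B 0, …, B (m-1)` so that edges go
exactly from each block to the cyclically next one. -/
def IsWhirlOn {V : Type*} (E : V → V → Prop) (K : Set V) (m : ℕ) : Prop :=
  ∃ B : ZMod m → Set V,
    (∀ i, (B i).Nonempty) ∧
    (∀ i, B i ⊆ K) ∧
    (∀ x ∈ K, ∃! i, x ∈ B i) ∧
    (∀ x ∈ K, ∀ y ∈ K, (E x y ↔ ∃ i, x ∈ B i ∧ y ∈ B (i + 1)))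

/-- `p 0 → p 1 → ⋯ → p len` is a path (a walk with pairwise distinct
vertices) in the digraph with edge relation `E`. -/
def IsPath {V : Type*} (E : V → V → Prop) (len : ℕ) (p : ℕ → V) : Prop :=
  (∀ i < len, E (p i) (p (i + 1))) ∧
  (∀ i ≤ len, ∀ j ≤ len, p i = p j → i = j)

/-- The walk `p 0 → ⋯ → p len` is pleasant: all its vertices belong to
trivial strongly connected components. -/
def IsPleasant {V : Type*} (E : V → V → Prop) (len : ℕ) (p : ℕ → V) : Prop :=
  ∀ i ≤ len, ¬ InNontrivialSCC E (p i)

/-- The connected component `K` (of an undirected graph) is complete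
bipartite: it splits into two nonempty parts with edges exactly between
vertices of different parts. -/
def IsCompleteBipartiteOn {V : Type*} (E : V → V → Prop) (K : Set V) : Prop :=
  ∃ B1 B2 : Set V, B1.Nonempty ∧ B2.Nonempty ∧ B1 ∪ B2 = K ∧ B1 ∩ B2 = ∅ ∧
    ∀ x ∈ K, ∀ y ∈ K, (E x y ↔ (x ∈ B1 ∧ y ∈ B2) ∨ (x ∈ B2 ∧ y ∈ B1))

/-- A DFS tree of size `n`: a rooted directed tree on the vertices
`x₁, …, xₙ` (here `Fin n`, the root being `0`), given by its parent function,
such that the parent of every non-root vertex precedes it and the vertex set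
of the induced subtree rooted at any vertex `i` is an interval `[i, i']`.
(The parent of the root is, by convention, the root itself.) -/
structure DFSTree (n : ℕ) where
  parent : Fin n → Fin n
  parent_lt : ∀ i : Fin n, 0 < (i : ℕ) → (parent i : ℕ) < (i : ℕ)
  parent_root : ∀ i : Fin n, (i : ℕ) = 0 → parent i = i
  interval : ∀ i j k : Fin n, i ≤ j → j ≤ k →
    (∃ a : ℕ, parent^[a] k = i) → (∃ a : ℕ, parent^[a] j = i)

/-- The depth of the vertex `i` in a DFS tree: the length of the path from
the root to `i`. -/
noncomputable def DFSTree.depth {n : ℕ} (T : DFSTree n) (i : Fin n) : ℕ :=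
  sInf {k : ℕ | (T.parent^[k] i : ℕ) = 0}

/-- The height of a DFS tree: the maximum depth of a vertex. -/
noncomputable def DFSTree.height {n : ℕ} (T : DFSTree n) : ℕ :=
  Finset.univ.sup fun i => T.depth i

/-- The vertex `i` is a leaf (childless vertex) of the DFS tree `T`. -/
def DFSTree.IsLeaf {n : ℕ} (T : DFSTree n) (i : Fin n) : Prop :=
  ∀ j : Fin n, T.parent j = i → j = i

/-- `t_h(n)`: the number of DFS trees of size `n` of height at most `h`. -/
noncomputable def tcount (h n : ℕ) : ℕ :=
  Nat.card {T : DFSTree n // T.height ≤ h}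

/-- `d` is a zag sequence: `d₁ = 0`, `d₂ = 1`, and
`1 ≤ d_{i+1} ≤ d_i + 1` for all `i` (1-indexed as in the paper;
here `d : Fin n → ℕ` is 0-indexed). -/
def IsZag {n : ℕ} (d : Fin n → ℕ) : Prop :=
  (∀ h : 0 < n, d ⟨0, h⟩ = 0) ∧
  (∀ h : 1 < n, d ⟨1, h⟩ = 1) ∧
  (∀ i : ℕ, ∀ h : i + 1 < n,
    1 ≤ d ⟨i + 1, h⟩ ∧ d ⟨i + 1, h⟩ ≤ d ⟨i, Nat.lt_of_succ_lt h⟩ + 1)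

/-- `M(t,t')`: the largest `m` such that the depth sequences of the DFS trees
of the bracketings `t` and `t'` are congruent modulo `m`. -/
noncomputable def Mval (t t' : BTree) : ℕ :=
  sSup {m : ℕ | ∀ i < t.size, t.depth i ≡ t'.depth i [MOD m]}

namespace BTree

variable {t t' l r : BTree}

lemma size_pos (t : BTree) : 0 < t.size := by
  induction t with
  | leaf => exact Nat.one_pos
  | node l r ihl _ => exact Nat.add_pos_left ihl _

lemma length_depths (t : BTree) : t.depths.length = t.size := by
  induction t with
  | leaf => rfl
  | node l r ihl ihr => simp [depths, size, ihl, ihr]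

lemma depth_node_of_lt {i : ℕ} (h : i < l.size) : (node l r).depth i = l.depth i := by
  rw [depth, depths, List.getD_append _ _ _ _ (by rwa [length_depths]), depth]

lemma depth_node_add {j : ℕ} (h : j < r.size) :
    (node l r).depth (l.size + j) = r.depth j + 1 := by
  rw [depth, depths, List.getD_append_right _ _ _ _ (by simp [length_depths]),
    length_depths, Nat.add_sub_cancel_left, List.getD_eq_getElem _ _ (by simpa [length_depths]),
    depth, List.getD_eq_getElem _ _ (by simpa [length_depths])]
  simp

lemma depth_zero (t : BTree) : t.depth 0 = 0 := by
  induction t with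
  | leaf => rfl
  | node l r ihl _ => rw [depth_node_of_lt l.size_pos, ihl]

lemma depth_node_size : (node l r).depth l.size = 1 := by
  simpa [depth_zero] using depth_node_add (l := l) r.size_pos

lemma depth_pos {i : ℕ} (h0 : 0 < i) (h : i < t.size) : 0 < t.depth i := by
  induction t generalizing i with
  | leaf => simp [size] at h; omega
  | node l r ihl _ =>
    rcases lt_or_ge i l.size with hi | hi
    · rw [depth_node_of_lt hi]; exact ihl h0 hi
    · obtain ⟨j, rfl⟩ := Nat.exists_eq_add_of_le hi
      rw [depth_node_add (by simp [size] at h; omega)]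
      exact Nat.succ_pos _

lemma depth_node_ne_one {i : ℕ} (hi : l.size < i) (h : i < (node l r).size) :
    (node l r).depth i ≠ 1 := by
  obtain ⟨j, rfl⟩ := Nat.exists_eq_add_of_lt hi
  rw [Nat.add_assoc, depth_node_add (by simp [size] at h; omega)]
  have := depth_pos (t := r) (i := j + 1) (by omega) (by simp [size] at h; omega)
  omega

lemma depths_injective : Function.Injective depths := by
  intro t
  induction t with
  | leaf =>
    intro t' h
    cases t' with
    | leaf => rfl
    | node l' r' =>
      have := congrArg List.length h
      simp only [length_depths, size] at this
      have := l'.size_pos; have := r'.size_pos; omega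
  | node l r ihl ihr =>
    intro t' h
    cases t' with
    | leaf =>
      have := congrArg List.length h
      simp only [length_depths, size] at this
      have := l.size_pos; have := r.size_pos; omega
    | node l' r' =>
      have hsize : (node l r).size = (node l' r').size := by
        rw [← length_depths, ← length_depths, h]
      have hdepth : ∀ i, (node l r).depth i = (node l' r').depth i := fun i => by
        rw [depth, depth, h]
      have hl : l.size = l'.size := by
        simp only [size] at hsize
        have := r.size_pos; have := r'.size_pos
        by_contra hne
        rcases Nat.lt_or_gt_of_ne hne with hlt | hlt
        · exact depth_node_ne_one hlt (by simp [size]; omega)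
            ((hdepth _).trans depth_node_size)
        · exact depth_node_ne_one hlt (by simp [size]; omega)
            ((hdepth _).symm.trans depth_node_size)
      obtain ⟨hL, hR⟩ := List.append_inj h (by rw [length_depths, length_depths, hl])
      rw [ihl hL, ihr (List.map_injective_iff.mpr (add_left_injective 1) hR)]

lemma exists_depth_ne (hsize : t.size = t'.size) (hne : t ≠ t') :
    ∃ i < t.size, t.depth i ≠ t'.depth i := by
  by_contra! h
  refine hne (depths_injective (List.ext_getElem (by rw [length_depths, length_depths, hsize])
    fun i hi hi' => ?_))
  have := h i (by rwa [length_depths] at hi)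
  rwa [depth, depth, List.getD_eq_getElem _ _ hi, List.getD_eq_getElem _ _ hi'] at this

lemma edgesFrom_eq_map (t : BTree) (k : ℕ) :
    t.edgesFrom k = t.edges.map fun e => (e.1 + k, e.2 + k) := by
  induction t generalizing k with
  | leaf => rfl
  | node l r ihl ihr =>
    rw [edges, edgesFrom, edgesFrom, Nat.zero_add, ihl k, ihr (k + l.size), ihr l.size, ← edges]
    simp only [List.map_cons, List.map_append, List.map_map]
    simp only [Function.comp_def, Nat.add_assoc, Nat.zero_add, Nat.add_comm l.size k]

lemma mem_edges_node {e : ℕ × ℕ} :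
    e ∈ (node l r).edges ↔
      e = (0, l.size) ∨ e ∈ l.edges ∨ ∃ e' ∈ r.edges, (e'.1 + l.size, e'.2 + l.size) = e := by
  rw [edges, edgesFrom, edgesFrom_eq_map r, List.mem_cons, List.mem_append, List.mem_map,
    Nat.zero_add]
  rfl

lemma lt_of_mem_edges {e : ℕ × ℕ} (he : e ∈ t.edges) : e.1 < e.2 ∧ e.2 < t.size := by
  induction t generalizing e with
  | leaf => simp [edges, edgesFrom] at he
  | node l r ihl ihr =>
    have := l.size_pos; have := r.size_pos
    simp only [size]
    rcases mem_edges_node.mp he with rfl | he | ⟨e', he', rfl⟩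
    · simp only; omega
    · have := ihl he; omega
    · have := ihr he'; simp only; omega

lemma depth_snd_of_mem_edges {e : ℕ × ℕ} (he : e ∈ t.edges) :
    t.depth e.2 = t.depth e.1 + 1 := by
  induction t generalizing e with
  | leaf => simp [edges, edgesFrom] at he
  | node l r ihl ihr =>
    rcases mem_edges_node.mp he with rfl | he | ⟨e', he', rfl⟩
    · simpa [depth_zero] using depth_node_size
    · have := lt_of_mem_edges he
      rw [depth_node_of_lt this.2, depth_node_of_lt (this.1.trans this.2), ihl he]
    · have := lt_of_mem_edges he'
      simp only
      rw [Nat.add_comm _ l.size, Nat.add_comm _ l.size, depth_node_add this.2,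
        depth_node_add (this.1.trans this.2), ihr he']

lemma exists_mem_edges {c : ℕ} (hc : 0 < c) (h : c < t.size) : ∃ p, (p, c) ∈ t.edges := by
  induction t generalizing c with
  | leaf => simp [size] at h; omega
  | node l r ihl ihr =>
    simp only [size] at h
    rcases lt_trichotomy c l.size with hlt | rfl | hgt
    · obtain ⟨p, hp⟩ := ihl hc hlt
      exact ⟨p, mem_edges_node.mpr (Or.inr (Or.inl hp))⟩
    · exact ⟨0, mem_edges_node.mpr (Or.inl rfl)⟩
    · obtain ⟨j, rfl⟩ := Nat.exists_eq_add_of_lt hgt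
      obtain ⟨p, hp⟩ := ihr (c := j + 1) (Nat.succ_pos j) (by omega)
      exact ⟨p + l.size, mem_edges_node.mpr (Or.inr (Or.inr ⟨_, hp, by simp; omega⟩))⟩

lemma eq_depth_of_forall_mem_edges {α : Type*} [AddMonoidWithOne α] (f : ℕ → α) (h0 : f 0 = 0)
    (hf : ∀ e ∈ t.edges, f e.2 = f e.1 + 1) : ∀ i < t.size, f i = t.depth i := by
  intro i
  induction i using Nat.strong_induction_on with
  | _ i ih =>
    intro hi
    rcases Nat.eq_zero_or_pos i with rfl | hpos
    · rw [h0, depth_zero, Nat.cast_zero]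
    · obtain ⟨p, hp⟩ := exists_mem_edges hpos hi
      have hpi := (lt_of_mem_edges hp).1
      rw [hf _ hp, depth_snd_of_mem_edges hp, ih p hpi (hpi.trans hi), Nat.cast_succ]

lemma evalFrom_eq_termOp {A : Type*} (op : A → A → A) (t : BTree) (f : ℕ → A) (k : ℕ) :
    t.evalFrom op f k = t.termOp op fun i => f (i + k) := by
  induction t generalizing k f with
  | leaf => simp [evalFrom, termOp]
  | node l r ihl ihr =>
    simp only [termOp, evalFrom] at ihl ihr ⊢
    rw [ihl, ihr, ihl, ihr (fun i => f (i + k))]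
    simp [Nat.add_comm, Nat.add_left_comm]

lemma termOp_node {A : Type*} (op : A → A → A) (l r : BTree) (f : ℕ → A) :
    (node l r).termOp op f = op (l.termOp op f) (r.termOp op fun i => f (i + l.size)) := by
  rw [termOp, evalFrom, evalFrom_eq_termOp, evalFrom_eq_termOp, Nat.zero_add]
  simp only [Nat.add_zero, termOp]

end BTree

section GraphAlgebra

variable {V : Type*} {E : V → V → Prop} {t t' : BTree}

open Classical in
lemma termOp_gaOp (t : BTree) (g : ℕ → V) :
    t.termOp (gaOp E) (fun i => some (g i)) =
      if ∀ e ∈ t.edges, E (g e.1) (g e.2) then some (g 0) else none := by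
  induction t generalizing g with
  | leaf => simp [BTree.termOp, BTree.evalFrom, BTree.edges, BTree.edgesFrom]
  | node l r ihl ihr =>
    have hedges : (∀ e ∈ (BTree.node l r).edges, E (g e.1) (g e.2)) ↔
        E (g 0) (g l.size) ∧ (∀ e ∈ l.edges, E (g e.1) (g e.2)) ∧
          ∀ e ∈ r.edges, E (g (e.1 + l.size)) (g (e.2 + l.size)) := by
      simp only [BTree.mem_edges_node]
      aesop
    rw [BTree.termOp_node, ihl, ihr (fun i => g (i + l.size)), Nat.zero_add]
    by_cases hl : ∀ e ∈ l.edges, E (g e.1) (g e.2)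
    · by_cases hr : ∀ e ∈ r.edges, E (g (e.1 + l.size)) (g (e.2 + l.size))
      · rw [if_pos hl, if_pos hr]
        by_cases h0 : E (g 0) (g l.size)
        · rw [if_pos (hedges.mpr ⟨h0, hl, hr⟩)]; simp [gaOp, h0]
        · rw [if_neg fun h => h0 (hedges.mp h).1]; simp [gaOp, h0]
      · rw [if_pos hl, if_neg hr, if_neg fun h => hr (hedges.mp h).2.2]; rfl
    · rw [if_neg hl, if_neg fun h => hl (hedges.mp h).2.1]
      split_ifs <;> rfl

lemma Satisfies.symm (hsat : Satisfies (gaOp E) t t') : Satisfies (gaOp E) t' t :=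
  fun f => (hsat f).symm

lemma Satisfies.forall_mem_edges_iff (hsat : Satisfies (gaOp E) t t') (g : ℕ → V) :
    (∀ e ∈ t.edges, E (g e.1) (g e.2)) ↔ ∀ e ∈ t'.edges, E (g e.1) (g e.2) := by
  have h := hsat fun i => some (g i)
  rw [termOp_gaOp, termOp_gaOp] at h
  split_ifs at h with h1 h2 h2
  · exact iff_of_true h1 h2
  · exact iff_of_false h1 h2

lemma Satisfies.rel_depth_of_mem_edges (hsat : Satisfies (gaOp E) t t') {w : ℕ → V}
    (hw : ∀ j, E (w j) (w (j + 1))) {e : ℕ × ℕ} (he : e ∈ t'.edges) :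
    E (w (t.depth e.1)) (w (t.depth e.2)) :=
  (hsat.forall_mem_edges_iff (w ∘ t.depth)).mp
    (fun e he => by simp only [Function.comp_apply, BTree.depth_snd_of_mem_edges he]; exact hw _)
    e he

end GraphAlgebra

section Walks

variable {V : Type*} {E : V → V → Prop}

def HasWalk (E : V → V → Prop) : ℕ → V → V → Prop
  | 0, x, y => x = y
  | l + 1, x, y => ∃ z, E x z ∧ HasWalk E l z y

lemma hasWalk_add {a b : ℕ} {x z : V} :
    HasWalk E (a + b) x z ↔ ∃ y, HasWalk E a x y ∧ HasWalk E b y z := by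
  induction a generalizing x with
  | zero => simp [HasWalk]
  | succ a ih =>
    rw [Nat.succ_add]
    simp only [HasWalk, ih]
    aesop

lemma HasWalk.cons {l : ℕ} {x y z : V} (hxy : E x y) (h : HasWalk E l y z) :
    HasWalk E (l + 1) x z :=
  ⟨y, hxy, h⟩

lemma HasWalk.append {a b : ℕ} {x y z : V} (h₁ : HasWalk E a x y) (h₂ : HasWalk E b y z) :
    HasWalk E (a + b) x z :=
  hasWalk_add.mpr ⟨y, h₁, h₂⟩

lemma HasWalk.snoc {l : ℕ} {x y z : V} (h : HasWalk E l x y) (hyz : E y z) :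
    HasWalk E (l + 1) x z :=
  h.append (HasWalk.cons hyz rfl)

lemma HasWalk.mul {l : ℕ} {x : V} (h : HasWalk E l x x) (k : ℕ) : HasWalk E (k * l) x x := by
  induction k with
  | zero => rw [Nat.zero_mul]; rfl
  | succ k ih => rw [Nat.succ_mul]; exact ih.append h

lemma reach_iff_exists_hasWalk {x y : V} : Reach E x y ↔ ∃ l, HasWalk E l x y := by
  constructor
  · intro h
    induction h with
    | refl => exact ⟨0, rfl⟩
    | tail _ hyz ih => obtain ⟨l, hl⟩ := ih; exact ⟨l + 1, hl.snoc hyz⟩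
  · rintro ⟨l, hl⟩
    induction l generalizing x with
    | zero => exact hl ▸ Relation.ReflTransGen.refl
    | succ l ih => obtain ⟨z, hxz, hz⟩ := hl; exact Relation.ReflTransGen.head hxz (ih hz)

lemma HasWalk.reach {l : ℕ} {x y : V} (h : HasWalk E l x y) : Reach E x y :=
  reach_iff_exists_hasWalk.mpr ⟨l, h⟩

lemma hasWalk_of_forall_rel {w : ℕ → V} (hw : ∀ j, E (w j) (w (j + 1))) (j : ℕ) :
    HasWalk E j (w 0) (w j) := by
  induction j with
  | zero => rfl
  | succ j ih => exact ih.snoc (hw j)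

lemma HasWalk.exists_prepend {l : ℕ} {x y : V} (h : HasWalk E l x y) {w : ℕ → V}
    (hw : ∀ j, E (w j) (w (j + 1))) (hw0 : w 0 = y) :
    ∃ w' : ℕ → V, (∀ j, E (w' j) (w' (j + 1))) ∧ w' 0 = x ∧ ∀ j, w' (l + j) = w j := by
  induction l generalizing x with
  | zero => exact ⟨w, hw, hw0.trans h.symm, fun j => by rw [Nat.zero_add]⟩
  | succ l ih =>
    obtain ⟨z, hxz, hz⟩ := h
    obtain ⟨w', hw', hw'0, hw'l⟩ := ih hz
    refine ⟨fun j => Nat.casesOn j x w', fun j => ?_, rfl, fun j => ?_⟩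
    · cases j with
      | zero => show E x (w' 0); rw [hw'0]; exact hxz
      | succ j => exact hw' j
    · rw [Nat.add_right_comm]; exact hw'l j

lemma exists_forall_rel_of_forall_exists {S : Set V} (hS : ∀ x ∈ S, ∃ y ∈ S, E x y) {x : V}
    (hx : x ∈ S) : ∃ w : ℕ → V, w 0 = x ∧ (∀ j, w j ∈ S) ∧ ∀ j, E (w j) (w (j + 1)) := by
  choose f hfS hf using fun y : S => hS y y.2
  let g : S → S := fun y => ⟨f y, hfS y⟩
  refine ⟨fun j => (g^[j] ⟨x, hx⟩ : V), rfl, fun j => (g^[j] _).2, fun j => ?_⟩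
  simp only [Function.iterate_succ_apply']
  exact hf _

end Walks

section StronglyConnected

variable {V : Type*} {E : V → V → Prop} {v : V}

lemma mem_scc_self (v : V) : v ∈ scc E v := ⟨.refl, .refl⟩

lemma scc_eq_singleton (hv : ¬ InNontrivialSCC E v) : scc E v = {v} := by
  refine Set.eq_singleton_iff_unique_mem.mpr ⟨mem_scc_self v, fun u hu => ?_⟩
  rcases Relation.ReflTransGen.cases_head hu.2 with h | ⟨z, hvz, hzu⟩
  · exact h.symm
  · exact absurd ⟨z, hvz, hzu.trans hu.1⟩ hv

lemma exists_hasWalk_succ_self (hv : InNontrivialSCC E v) {x : V} (hx : x ∈ scc E v) :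
    ∃ l, HasWalk E (l + 1) x x := by
  obtain ⟨u, hvu, huv⟩ := hv
  obtain ⟨a, ha⟩ := reach_iff_exists_hasWalk.mp hx.1
  obtain ⟨b, hb⟩ := reach_iff_exists_hasWalk.mp hx.2
  obtain ⟨c, hc⟩ := reach_iff_exists_hasWalk.mp huv
  have h := (ha.append (HasWalk.cons hvu hc)).append hb
  exact ⟨a + c + b, by rwa [show a + (c + 1) + b = a + c + b + 1 by omega] at h⟩

lemma exists_rel_mem_scc (hv : InNontrivialSCC E v) {x : V} (hx : x ∈ scc E v) :
    ∃ y ∈ scc E v, E x y := by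
  obtain ⟨l, z, hxz, hzx⟩ := exists_hasWalk_succ_self hv hx
  exact ⟨z, ⟨hzx.reach.trans hx.1, hx.2.tail hxz⟩, hxz⟩

lemma exists_hasWalk_to (hv : InNontrivialSCC E v) {x : V} (hx : x ∈ scc E v) (a : ℕ) :
    ∃ z, HasWalk E a z x := by
  obtain ⟨l, hl⟩ := exists_hasWalk_succ_self hv hx
  have h := hl.mul a
  rw [show a * (l + 1) = a * l + a by ring, hasWalk_add] at h
  obtain ⟨z, -, hz⟩ := h
  exact ⟨z, hz⟩

lemma exists_forall_rel_through (hv : InNontrivialSCC E v) {x y : V} (hx : x ∈ scc E v)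
    (hy : y ∈ scc E v) {l : ℕ} (h : HasWalk E l x y) (a : ℕ) :
    ∃ w : ℕ → V, (∀ j, E (w j) (w (j + 1))) ∧ w a = x ∧ w (a + l) = y := by
  obtain ⟨u, rfl, -, hu⟩ :=
    exists_forall_rel_of_forall_exists (fun _ hx => exists_rel_mem_scc hv hx) hy
  obtain ⟨w₁, hw₁, rfl, hw₁l⟩ := h.exists_prepend hu rfl
  obtain ⟨z, hz⟩ := exists_hasWalk_to hv hx a
  obtain ⟨w, hw, -, hwa⟩ := hz.exists_prepend hw₁ rfl
  exact ⟨w, hw, by simpa using hwa 0, by rw [hwa]; simpa using hw₁l 0⟩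

end StronglyConnected

section Period

variable {V : Type*} {E : V → V → Prop} {v : V}

def closedWalkLengths (E : V → V → Prop) (v : V) : AddSubmonoid ℕ where
  carrier := {l | HasWalk E l v v}
  add_mem' := HasWalk.append
  zero_mem' := rfl

noncomputable def period (E : V → V → Prop) (v : V) : ℕ :=
  Nat.setGcd (closedWalkLengths E v)

lemma period_dvd {l : ℕ} (h : HasWalk E l v v) : period E v ∣ l :=
  Nat.setGcd_dvd_of_mem h

lemma period_pos (hv : InNontrivialSCC E v) : 0 < period E v := by
  refine Nat.pos_of_ne_zero fun h0 => ?_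
  obtain ⟨l, hl⟩ := exists_hasWalk_succ_self hv (mem_scc_self v)
  exact Nat.succ_ne_zero l (Nat.setGcd_eq_zero_iff.mp h0 hl)

lemma exists_hasWalk_of_period_dvd (E : V → V → Prop) (v : V) :
    ∃ N, ∀ l ≥ N, period E v ∣ l → HasWalk E l v v := by
  obtain ⟨N, hN⟩ := Nat.exists_mem_closure_of_ge (closedWalkLengths E v : Set ℕ)
  refine ⟨N, fun l hl hd => ?_⟩
  have h := hN l hl hd
  rwa [AddSubmonoid.closure_eq] at h

lemma natCast_eq_of_hasWalk {x : V} (hx : Reach E x v) {l₁ l₂ : ℕ} (h₁ : HasWalk E l₁ v x)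
    (h₂ : HasWalk E l₂ v x) : (l₁ : ZMod (period E v)) = l₂ := by
  obtain ⟨r, hr⟩ := reach_iff_exists_hasWalk.mp hx
  have e₁ := (ZMod.natCast_eq_zero_iff _ _).mpr (period_dvd (h₁.append hr))
  have e₂ := (ZMod.natCast_eq_zero_iff _ _).mpr (period_dvd (h₂.append hr))
  push_cast at e₁ e₂
  exact add_right_cancel (e₁.trans e₂.symm)

end Period

section Whirl

variable {V : Type*} {E : V → V → Prop} {v : V} {d : ℕ}

lemma rel_of_hasWalk_mul_add_one
    (hshort : ∀ x ∈ scc E v, ∀ y ∈ scc E v, HasWalk E (d + 1) x y → E x y) (k : ℕ) {x y : V}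
    (hx : x ∈ scc E v) (hy : y ∈ scc E v) (h : HasWalk E (k * d + 1) x y) : E x y := by
  induction k generalizing x with
  | zero =>
    rw [Nat.zero_mul, Nat.zero_add] at h
    obtain ⟨z, hxz, rfl⟩ := h
    exact hxz
  | succ k ih =>
    rw [show (k + 1) * d + 1 = (d + 1) + k * d by ring, hasWalk_add] at h
    obtain ⟨z, hxz, hzy⟩ := h
    have hz : z ∈ scc E v := ⟨hzy.reach.trans hy.1, hx.2.trans hxz.reach⟩
    exact ih hx (HasWalk.cons (hshort x hx z hz hxz) hzy)

/-- A walk `x → v → ⋯ → v → y` whose loop at `v` is long enough has length `k * d + 1`. -/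
lemma rel_of_natCast_eq_add_one (hd0 : 0 < d) (hd : period E v ∣ d)
    (hshort : ∀ x ∈ scc E v, ∀ y ∈ scc E v, HasWalk E (d + 1) x y → E x y) {x y : V}
    (hx : x ∈ scc E v) (hy : y ∈ scc E v) {lx ly : ℕ} (hlx : HasWalk E lx v x)
    (hly : HasWalk E ly v y) (h : (ly : ZMod (period E v)) = lx + 1) : E x y := by
  obtain ⟨N, hN⟩ := exists_hasWalk_of_period_dvd E v
  obtain ⟨b, hb⟩ := reach_iff_exists_hasWalk.mp hx.1
  set k := N + b + ly
  have hk : k ≤ k * d := Nat.le_mul_of_pos_right k hd0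
  have hloop : HasWalk E (k * d + 1 - (b + ly)) v v := by
    refine hN _ (by omega) ((ZMod.natCast_eq_zero_iff _ _).mp ?_)
    have hd' := (ZMod.natCast_eq_zero_iff _ _).mpr hd
    have hbx := (ZMod.natCast_eq_zero_iff _ _).mpr (period_dvd (hlx.append hb))
    push_cast [Nat.cast_sub (show b + ly ≤ k * d + 1 by omega)] at hbx ⊢
    linear_combination (k : ZMod (period E v)) * hd' - hbx - h
  have hwalk := (hb.append hloop).append hly
  rw [show b + (k * d + 1 - (b + ly)) + ly = k * d + 1 by omega] at hwalk
  exact rel_of_hasWalk_mul_add_one hshort k hx hy hwalk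

lemma isWhirlOn_scc_period (hv : InNontrivialSCC E v) (hd0 : 0 < d) (hd : period E v ∣ d)
    (hshort : ∀ x ∈ scc E v, ∀ y ∈ scc E v, HasWalk E (d + 1) x y → E x y) :
    IsWhirlOn E (scc E v) (period E v) := by
  have : NeZero (period E v) := ⟨(period_pos hv).ne'⟩
  obtain ⟨w, hw0, hwK, hw⟩ :=
    exists_forall_rel_of_forall_exists (fun _ hx => exists_rel_mem_scc hv hx) (mem_scc_self v)
  have hwalk : ∀ j, HasWalk E j v (w j) := fun j => hw0 ▸ hasWalk_of_forall_rel hw j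
  refine ⟨fun i => {x ∈ scc E v | ∃ l, HasWalk E l v x ∧ (l : ZMod (period E v)) = i},
    fun i => ?_, fun i x hx => hx.1, fun x hx => ?_, fun x hx y hy => ⟨fun hxy => ?_, ?_⟩⟩
  · exact ⟨w i.val, hwK _, i.val, hwalk _, ZMod.natCast_zmod_val i⟩
  · obtain ⟨l, hl⟩ := reach_iff_exists_hasWalk.mp hx.2
    exact ⟨l, ⟨hx, l, hl, rfl⟩, fun i ⟨_, l', hl', hi⟩ => hi ▸ natCast_eq_of_hasWalk hx.1 hl' hl⟩
  · obtain ⟨l, hl⟩ := reach_iff_exists_hasWalk.mp hx.2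
    exact ⟨l, ⟨hx, l, hl, rfl⟩, hy, l + 1, hl.snoc hxy, Nat.cast_succ l⟩
  · rintro ⟨i, ⟨-, lx, hlx, rfl⟩, -, ly, hly, h⟩
    exact rel_of_natCast_eq_add_one hd0 hd hshort hx hy hlx hly h

end Whirl

section Bracketings

variable {V : Type*} {E : V → V → Prop} {v : V} {t t' : BTree}

lemma depth_modEq_period (hv : InNontrivialSCC E v) (hsat : Satisfies (gaOp E) t t')
    (hsize : t.size = t'.size) : ∀ i < t.size, t.depth i ≡ t'.depth i [MOD period E v] := by
  obtain ⟨w, hw0, hwK, hw⟩ :=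
    exists_forall_rel_of_forall_exists (fun _ hx => exists_rel_mem_scc hv hx) (mem_scc_self v)
  have hwalk : ∀ j, HasWalk E j v (w j) := fun j => hw0 ▸ hasWalk_of_forall_rel hw j
  have hdepth := t'.eq_depth_of_forall_mem_edges (fun i => (t.depth i : ZMod (period E v)))
    (by rw [BTree.depth_zero, Nat.cast_zero]) fun e he => by
      rw [← Nat.cast_succ]
      exact natCast_eq_of_hasWalk (hwK _).1 (hwalk _)
        ((hwalk _).snoc (hsat.rel_depth_of_mem_edges hw he))
  exact fun i hi => (ZMod.natCast_eq_natCast_iff _ _ _).mp (hdepth i (hsize ▸ hi))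

lemma forall_modEq_depth_iff {m : ℕ} :
    (∀ i < t.size, t.depth i ≡ t'.depth i [MOD m]) ↔
      m ∣ (Finset.range t.size).gcd fun i => ((t'.depth i : ℤ) - t.depth i).natAbs := by
  simp [Finset.dvd_gcd_iff, Nat.modEq_iff_dvd, Int.natCast_dvd]

lemma Mval_eq_gcd (hne : ∃ i < t.size, t.depth i ≠ t'.depth i) :
    Mval t t' = (Finset.range t.size).gcd fun i => ((t'.depth i : ℤ) - t.depth i).natAbs := by
  obtain ⟨i, hi, hne⟩ := hne
  have hpos : 0 < (Finset.range t.size).gcd fun i => ((t'.depth i : ℤ) - t.depth i).natAbs :=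
    Nat.pos_of_ne_zero fun h0 => hne <| by
      have := Finset.gcd_eq_zero_iff.mp h0 i (Finset.mem_range.mpr hi)
      omega
  refine IsGreatest.csSup_eq ⟨forall_modEq_depth_iff.mpr dvd_rfl, fun m hm => ?_⟩
  exact Nat.le_of_dvd hpos (forall_modEq_depth_iff.mp hm)

/-- At the first position `c` where the depth sequences differ, the parent `p` of `c` in the
shallower tree has the same depth `a` in both trees, and the identity turns the edge `(p, c)`
into a shortcut of an infinite walk from step `a` to step `b`, the deeper depth of `c`. -/
lemma exists_shortcut (hsize : t.size = t'.size) (hne : t ≠ t') (hsat : Satisfies (gaOp E) t t') :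
    ∃ a b, a + 1 < b ∧ (∀ m, (∀ i < t.size, t.depth i ≡ t'.depth i [MOD m]) → b ≡ a + 1 [MOD m]) ∧
      ∀ w : ℕ → V, (∀ j, E (w j) (w (j + 1))) → E (w a) (w b) := by
  classical
  have hex := BTree.exists_depth_ne hsize hne
  set c := Nat.find hex
  have hc : c < t.size := (Nat.find_spec hex).1
  have hcne : t.depth c ≠ t'.depth c := (Nat.find_spec hex).2
  have hbefore : ∀ i < c, t.depth i = t'.depth i := fun i hi =>
    not_not.mp fun h => Nat.find_min hex hi ⟨hi.trans hc, h⟩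
  have hc0 : 0 < c := Nat.pos_of_ne_zero fun h0 => hcne (by
    rw [h0, BTree.depth_zero, BTree.depth_zero])
  rcases Nat.lt_or_gt_of_ne hcne with hlt | hlt
  · obtain ⟨p, hp⟩ := BTree.exists_mem_edges hc0 hc
    have hdp : t.depth c = t.depth p + 1 := BTree.depth_snd_of_mem_edges hp
    have hpp := hbefore p (BTree.lt_of_mem_edges hp).1
    refine ⟨t'.depth p, t'.depth c, by omega, fun m hm => ?_,
      fun w hw => hsat.symm.rel_depth_of_mem_edges hw hp⟩
    rw [← hpp, ← hdp]
    exact (hm c hc).symm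
  · obtain ⟨p, hp⟩ := BTree.exists_mem_edges hc0 (hc.trans_eq hsize)
    have hdp : t'.depth c = t'.depth p + 1 := BTree.depth_snd_of_mem_edges hp
    have hpp := hbefore p (BTree.lt_of_mem_edges hp).1
    refine ⟨t.depth p, t.depth c, by omega, fun m hm => ?_,
      fun w hw => hsat.rel_depth_of_mem_edges hw hp⟩
    rw [hpp, ← hdp]
    exact hm c hc

end Bracketings

end AssocSpec

open AssocSpec in
theorem stmt15_general {V : Type*} (E : V → V → Prop) (n : ℕ)
    (t t' : BTree) (ht : t.size = n) (ht' : t'.size = n) (hne : t ≠ t')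
    (hsat : Satisfies (gaOp E) t t') :
    ∀ v : V,
      (scc E v = {v} ∧ ¬ E v v) ∨
      ∃ m : ℕ, 1 ≤ m ∧ m ∣ Mval t t' ∧ IsWhirlOn E (scc E v) m := by
  intro v
  by_cases hv : InNontrivialSCC E v
  · right
    have hsize : t.size = t'.size := ht.trans ht'.symm
    have hdepth := depth_modEq_period hv hsat hsize
    obtain ⟨a, b, hab, hba, hshort⟩ := exists_shortcut hsize hne hsat
    refine ⟨period E v, period_pos hv, ?_,
      isWhirlOn_scc_period hv (d := b - (a + 1)) (by omega) ?_ fun x hx y hy hxy => ?_⟩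
    · rw [Mval_eq_gcd (BTree.exists_depth_ne hsize hne)]
      exact forall_modEq_depth_iff.mp hdepth
    · exact (Nat.modEq_iff_dvd' hab.le).mp (hba _ hdepth).symm
    · obtain ⟨w, hw, rfl, rfl⟩ := exists_forall_rel_through hv hx hy hxy a
      rw [show a + (b - (a + 1) + 1) = b by omega]
      exact hshort w hw
  · exact Or.inl ⟨scc_eq_singleton hv, fun h => hv ⟨v, h, .refl⟩⟩

open AssocSpec in
/-- If the graph algebra of a digraph `G` satisfies a
nontrivial bracketing identity `t ≈ t'`, then every strongly connected
component of `G` is either trivial or an `m`-whirl for some divisor `m` of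
`M(t,t')`. -/
theorem stmt15 {V : Type*} [Nonempty V] (E : V → V → Prop) (n : ℕ)
    (t t' : BTree) (ht : t.size = n) (ht' : t'.size = n) (hne : t ≠ t')
    (hsat : Satisfies (gaOp E) t t') :
    ∀ v : V,
      (scc E v = {v} ∧ ¬ E v v) ∨
      ∃ m : ℕ, 1 ≤ m ∧ m ∣ Mval t t' ∧ IsWhirlOn E (scc E v) m :=
  stmt15_general E n t t' ht ht' hne hsat
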